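/- Let (V, d_T) be a finite tree metric in which all pairwise distances between distinct pairs are distinct. Let E be a set of edges over V such that the graph (V, E) is connected, let {v, u} ∈ E and {v, w} ∈ E with u ≺ (v,w), and let E' = (E \ {{v,w}}) ∪ {{u,w}}. Then (V, E') is connected and the total d_T-weight of the minimum spanning tree MST(E', d_T) is less than or equal to the total d_T-weight of MST(E, d_T). -/

import Mathlib

/-- The tree metric: the weighted length of the unique path between `x` and `y`
in the tree `G` with edge weights `f`. -/
noncomputable def treeDist {W : Type} (G : SimpleGraph W) (hG : G.IsTree) (f : Sym2 W → ℝ)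
    (x y : W) : ℝ :=
  ((hG.existsUnique_path x y).choose.edges.map f).sum

/-- `d` is a tree metric: it is the restriction to `V` of the path metric of a finite
weighted tree with positive edge weights. -/
def IsTreeMetric {V : Type} (d : V → V → ℝ) : Prop :=
  ∃ (W : Type) (_ : Fintype W) (G : SimpleGraph W) (hG : G.IsTree) (f : Sym2 W → ℝ)
    (ι : V → W), (∀ e ∈ G.edgeSet, 0 < f e) ∧ Function.Injective ι ∧
      ∀ x y, d x y = treeDist G hG f (ι x) (ι y)

/-- All pairwise distances between distinct pairs are distinct: two distinct pairs can only
have equal distance if they are the same unordered pair. -/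
def DistinctDists {V : Type} (d : V → V → ℝ) : Prop :=
  ∀ x y x' y' : V, x ≠ y → x' ≠ y' → d x y = d x' y' → s(x, y) = s(x', y')

/-- The weight of an unordered edge under the (symmetric) distance `d`. -/
noncomputable def sym2Weight {V : Type} (d : V → V → ℝ) : Sym2 V → ℝ :=
  Sym2.lift ⟨fun x y => (d x y + d y x) / 2, fun _ _ => by ring⟩

/-- The total `d`-weight of a finite set of edges. -/
noncomputable def edgesWeight {V : Type} (d : V → V → ℝ) (E : Finset (Sym2 V)) : ℝ :=
  ∑ e ∈ E, sym2Weight d e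

/-- `E` is the edge set of a spanning tree on `V`: it has no loops and the resulting
graph is connected and acyclic. -/
def IsSpanningTreeEdges {V : Type} (E : Set (Sym2 V)) : Prop :=
  (∀ e ∈ E, ¬ e.IsDiag) ∧ (SimpleGraph.fromEdgeSet E).IsTree

/-- `M` is a minimum spanning tree using only edges from `Base`, with edge weights `d`:
it is a spanning tree contained in `Base` minimizing the total weight among all such
spanning trees.  Taking `Base = Set.univ` gives the MST over the complete graph on `V`. -/
def IsMSTOver {V : Type} [Fintype V] [DecidableEq V] (d : V → V → ℝ)
    (Base : Set (Sym2 V)) (M : Finset (Sym2 V)) : Prop :=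
  ↑M ⊆ Base ∧ IsSpanningTreeEdges (↑M : Set (Sym2 V)) ∧
    ∀ E : Finset (Sym2 V), ↑E ⊆ Base → IsSpanningTreeEdges (↑E : Set (Sym2 V)) →
      edgesWeight d M ≤ edgesWeight d E

/-! If an MST `M` of `E` avoids `vw`, it is already a spanning tree inside `E'`. Otherwise deleting
`vw` cuts `M` into the side of `v` and the side of `w`; whichever side `u` lies on, one of the edges
`uw`, `vu` of `E'` joins the two sides again, and since `u ≺ (v, w)` it is lighter than `vw`. The
resulting spanning tree inside `E'` bounds the weight of the MST of `E'`. Connectivity of `E'`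
holds because `vw` is rerouted along the path `v u w`. -/

namespace SimpleGraph

variable {V : Type*} {G H : SimpleGraph V}

lemma Reachable.of_forall_adj_reachable (h : ∀ ⦃x y⦄, G.Adj x y → H.Reachable x y) {x y : V}
    (hxy : G.Reachable x y) : H.Reachable x y := by
  rw [reachable_iff_reflTransGen] at hxy ⊢
  exact Relation.reflTransGen_closed (fun x y hadj => (reachable_iff_reflTransGen x y).mp (h hadj))
    _ _ hxy

lemma Connected.of_sup_edge {a b : V} (hG : (G ⊔ edge a b).Connected) (hab : G.Reachable a b) :
    G.Connected := by
  have : Nonempty V := hG.nonempty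
  refine ⟨fun x y => (hG.preconnected x y).of_forall_adj_reachable fun x' y' hadj => ?_⟩
  rcases hadj with hadj | hadj
  · exact hadj.reachable
  · obtain ⟨⟨rfl, rfl⟩ | ⟨rfl, rfl⟩, -⟩ := (edge_adj ..).mp hadj
    · exact hab
    · exact hab.symm

lemma Reachable.reachable_or_of_sup_edge {a b x y : V} (h : (H ⊔ edge a b).Reachable x y)
    (hy : H.Reachable y a ∨ H.Reachable y b) : H.Reachable x a ∨ H.Reachable x b := by
  obtain ⟨p⟩ := h
  induction p with
  | nil => exact hy
  | cons hadj _ ih =>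
    rcases hadj with hadj | hadj
    · exact (ih hy).imp hadj.reachable.trans hadj.reachable.trans
    · obtain ⟨⟨rfl, -⟩ | ⟨rfl, -⟩, -⟩ := (edge_adj ..).mp hadj
      · exact .inl .rfl
      · exact .inr .rfl

lemma Connected.reachable_deleteEdges_or (hG : G.Connected) (a b x : V) :
    (G.deleteEdges {s(a, b)}).Reachable x a ∨ (G.deleteEdges {s(a, b)}).Reachable x b :=
  ((hG.preconnected x a).mono le_sdiff_sup).reachable_or_of_sup_edge (.inl .rfl)

lemma IsTree.not_reachable_deleteEdges {a b x y : V} (hG : G.IsTree) (hab : G.Adj a b)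
    (hx : (G.deleteEdges {s(a, b)}).Reachable a x) (hy : (G.deleteEdges {s(a, b)}).Reachable b y) :
    ¬(G.deleteEdges {s(a, b)}).Reachable x y := fun hxy =>
  isBridge_iff.mp (isAcyclic_iff_forall_adj_isBridge.mp hG.isAcyclic hab)
    (hx.trans (hxy.trans hy.symm))

lemma IsTree.deleteEdges_sup_edge {a b x y : V} (hG : G.IsTree) (hab : G.Adj a b)
    (hx : (G.deleteEdges {s(a, b)}).Reachable a x) (hy : (G.deleteEdges {s(a, b)}).Reachable b y) :
    (G.deleteEdges {s(a, b)} ⊔ edge x y).IsTree := by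
  set H := G.deleteEdges {s(a, b)}
  have hxy := hG.not_reachable_deleteEdges hab hx hy
  have hxy_adj : (H ⊔ edge x y).Adj x y :=
    .inr ((edge_adj ..).mpr ⟨.inl ⟨rfl, rfl⟩, fun h => hxy (h ▸ .rfl)⟩)
  have to_x (z : V) : (H ⊔ edge x y).Reachable z x := by
    rcases hG.connected.reachable_deleteEdges_or a b z with hz | hz
    · exact (hz.trans hx).mono le_sup_left
    · exact ((hz.trans hy).mono le_sup_left).trans hxy_adj.reachable.symm
  have : Nonempty V := ⟨a⟩
  exact ⟨⟨fun z z' => (to_x z).trans (to_x z').symm⟩,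
    (hG.isAcyclic.anti (deleteEdges_le _)).sup_edge_of_not_reachable hxy⟩

end SimpleGraph

open SimpleGraph

section SpanningTree

variable {V : Type} {S : Set (Sym2 V)}

lemma IsSpanningTreeEdges.exchange (hS : IsSpanningTreeEdges S) {a b x y : V}
    (hab : s(a, b) ∈ S) (hx : (fromEdgeSet (S \ {s(a, b)})).Reachable a x)
    (hy : (fromEdgeSet (S \ {s(a, b)})).Reachable b y) :
    s(x, y) ∉ S \ {s(a, b)} ∧ IsSpanningTreeEdges (insert s(x, y) (S \ {s(a, b)})) := by
  obtain ⟨hloop, htree⟩ := hS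
  have hadj : (fromEdgeSet S).Adj a b :=
    (fromEdgeSet_adj _).mpr ⟨hab, fun h => hloop _ hab (Sym2.mk_isDiag_iff.mpr h)⟩
  rw [← deleteEdges_fromEdgeSet] at hx hy
  have hxy := htree.not_reachable_deleteEdges hadj hx hy
  have hne : x ≠ y := fun h => hxy (h ▸ .rfl)
  refine ⟨fun hmem => hxy ?_, fun e he => ?_, ?_⟩
  · rw [deleteEdges_fromEdgeSet]
    exact ((fromEdgeSet_adj _).mpr ⟨hmem, hne⟩).reachable
  · rcases he with rfl | ⟨he, -⟩
    · exact fun h => hne (Sym2.mk_isDiag_iff.mp h)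
    · exact hloop e he
  · rw [Set.insert_eq, fromEdgeSet_union, sup_comm, ← deleteEdges_fromEdgeSet]
    exact htree.deleteEdges_sup_edge hadj hx hy

lemma IsSpanningTreeEdges.exists_exchange (hS : IsSpanningTreeEdges S) {v w : V}
    (hvw : s(v, w) ∈ S) (u : V) :
    ∃ e ∈ ({s(u, w), s(v, u)} : Set (Sym2 V)),
      e ∉ S \ {s(v, w)} ∧ IsSpanningTreeEdges (insert e (S \ {s(v, w)})) := by
  have hcut := hS.2.connected.reachable_deleteEdges_or v w u
  rw [deleteEdges_fromEdgeSet] at hcut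
  rcases hcut with hu | hu
  · exact ⟨_, .inl rfl, hS.exchange hvw hu.symm .rfl⟩
  · exact ⟨_, .inr rfl, hS.exchange hvw .rfl hu.symm⟩

end SpanningTree

lemma treeDist_comm {W : Type} (G : SimpleGraph W) (hG : G.IsTree) (f : Sym2 W → ℝ) (x y : W) :
    treeDist G hG f x y = treeDist G hG f y x := by
  obtain ⟨-, huniq⟩ := (hG.existsUnique_path x y).choose_spec
  have hrev := huniq _ (hG.existsUnique_path y x).choose_spec.1.reverse
  unfold treeDist
  rw [← hrev, Walk.edges_reverse, List.map_reverse, List.sum_reverse]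

lemma IsTreeMetric.symm {V : Type} {d : V → V → ℝ} (hd : IsTreeMetric d) (x y : V) :
    d x y = d y x := by
  obtain ⟨W, _, G, hG, f, ι, -, -, hdist⟩ := hd
  rw [hdist, hdist, treeDist_comm]

section Reroute

variable {V : Type} {E : Set (Sym2 V)} {u v w : V}

lemma SimpleGraph.Connected.fromEdgeSet_reroute (hconn : (fromEdgeSet E).Connected)
    (hvu : s(v, u) ∈ E) (huv : u ≠ v) (huw : u ≠ w) :
    (fromEdgeSet (insert s(u, w) (E \ {s(v, w)}))).Connected := by
  refine Connected.of_sup_edge (a := v) (b := w) (hconn.mono ?_) ?_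
  · rw [edge, ← fromEdgeSet_union]
    refine fromEdgeSet_mono fun e he => ?_
    by_cases hevw : e = s(v, w)
    · exact .inr hevw
    · exact .inl (.inr ⟨he, hevw⟩)
  · have hvu' : s(v, u) ∈ insert s(u, w) (E \ {s(v, w)}) :=
      .inr ⟨hvu, fun h => huw (Sym2.congr_right.mp h)⟩
    exact ((fromEdgeSet_adj _).mpr ⟨hvu', huv.symm⟩).reachable.trans
      ((fromEdgeSet_adj _).mpr ⟨.inl rfl, huw⟩).reachable

variable {d : V → V → ℝ}

lemma sym2Weight_mk (hd : ∀ x y, d x y = d y x) (x y : V) : sym2Weight d s(x, y) = d x y := by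
  simp only [sym2Weight, Sym2.lift_mk, hd y x, add_self_div_two]

variable [DecidableEq V]

lemma edgesWeight_insert_erase {M : Finset (Sym2 V)} {e e' : Sym2 V}
    (he : e ∈ M) (he' : e' ∉ M.erase e) :
    edgesWeight d (insert e' (M.erase e)) = edgesWeight d M - sym2Weight d e + sym2Weight d e' := by
  rw [edgesWeight, edgesWeight, Finset.sum_insert he', ← Finset.add_sum_erase _ _ he]
  ring

lemma IsSpanningTreeEdges.exists_reroute {M : Finset (Sym2 V)}
    (hM : IsSpanningTreeEdges (M : Set (Sym2 V))) (hME : ↑M ⊆ E) (hvu : s(v, u) ∈ E)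
    (huw : u ≠ w)
    (hu : sym2Weight d s(v, u) ≤ sym2Weight d s(v, w))
    (hw : sym2Weight d s(u, w) ≤ sym2Weight d s(v, w)) :
    ∃ N : Finset (Sym2 V), ↑N ⊆ insert s(u, w) (E \ {s(v, w)}) ∧
      IsSpanningTreeEdges (N : Set (Sym2 V)) ∧ edgesWeight d N ≤ edgesWeight d M := by
  by_cases hvw : s(v, w) ∈ M
  swap
  · refine ⟨M, fun e he => .inr ⟨hME he, ?_⟩, hM, le_rfl⟩
    rintro rfl
    exact hvw he
  obtain ⟨e, he, hnew, hN⟩ := hM.exists_exchange hvw u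
  have hcoe : (↑(insert e (M.erase s(v, w))) : Set (Sym2 V)) = insert e (↑M \ {s(v, w)}) := by
    rw [Finset.coe_insert, Finset.coe_erase]
  have heE' : e ∈ insert s(u, w) (E \ {s(v, w)}) := by
    rcases he with rfl | rfl
    · exact .inl rfl
    · exact .inr ⟨hvu, fun h => huw (Sym2.congr_right.mp h)⟩
  have hle : sym2Weight d e ≤ sym2Weight d s(v, w) := by rcases he with rfl | rfl <;> assumption
  refine ⟨insert e (M.erase s(v, w)), ?_, hcoe ▸ hN, ?_⟩
  · rw [hcoe]
    exact Set.insert_subset heE' ((Set.sdiff_subset_sdiff_left hME).trans (Set.subset_insert _ _))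
  · rw [edgesWeight_insert_erase hvw (by simpa [← Finset.coe_erase] using hnew)]
    linarith

end Reroute

theorem mst_delegation_potential_general {V : Type} [Fintype V] [DecidableEq V] (d : V → V → ℝ)
    (htm : IsTreeMetric d)
    (E : Set (Sym2 V)) (hconn : (SimpleGraph.fromEdgeSet E).Connected)
    (u v w : V) (huE : s(v, u) ∈ E)
    (hprec : d u v < d v w ∧ d u w < d v w) :
    (SimpleGraph.fromEdgeSet (insert s(u, w) (E \ {s(v, w)}))).Connected ∧
      ∀ M M' : Finset (Sym2 V), IsMSTOver d E M →
        IsMSTOver d (insert s(u, w) (E \ {s(v, w)})) M' →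
          edgesWeight d M' ≤ edgesWeight d M := by
  have hd := htm.symm
  obtain ⟨huv_lt, huw_lt⟩ := hprec
  have huv : u ≠ v := by rintro rfl; exact huw_lt.false
  have huw : u ≠ w := by rintro rfl; rw [hd] at huv_lt; exact huv_lt.false
  refine ⟨hconn.fromEdgeSet_reroute huE huv huw, ?_⟩
  rintro M M' ⟨hME, hM, -⟩ ⟨-, -, hM'min⟩
  have hu : sym2Weight d s(v, u) ≤ sym2Weight d s(v, w) := by
    rw [sym2Weight_mk hd, sym2Weight_mk hd, hd]; exact huv_lt.le
  have hw : sym2Weight d s(u, w) ≤ sym2Weight d s(v, w) := by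
    rw [sym2Weight_mk hd, sym2Weight_mk hd]; exact huw_lt.le
  obtain ⟨N, hNE, hN, hNM⟩ := hM.exists_reroute hME huE huw hu hw
  exact (hM'min N hNE hN).trans hNM

/-- Let `E` be a connected edge set over a tree metric with pairwise distinct
distances, with `{v,u} ∈ E`, `{v,w} ∈ E` and `u ≺ (v,w)`, and let
`E' = (E \ {{v,w}}) ∪ {{u,w}}`.  Then `(V, E')` is connected and the weight of the MST of
`E'` is at most the weight of the MST of `E`. -/
theorem mst_delegation_potential {V : Type} [Fintype V] [DecidableEq V] (d : V → V → ℝ)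
    (htm : IsTreeMetric d) (hdd : DistinctDists d)
    (E : Set (Sym2 V)) (hconn : (SimpleGraph.fromEdgeSet E).Connected)
    (u v w : V) (huE : s(v, u) ∈ E) (hwE : s(v, w) ∈ E)
    (hprec : d u v < d v w ∧ d u w < d v w) :
    (SimpleGraph.fromEdgeSet (insert s(u, w) (E \ {s(v, w)}))).Connected ∧
      ∀ M M' : Finset (Sym2 V), IsMSTOver d E M →
        IsMSTOver d (insert s(u, w) (E \ {s(v, w)})) M' →
          edgesWeight d M' ≤ edgesWeight d M :=
  mst_delegation_potential_general d htm E hconn u v w huE hprec
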